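/- arXiv:1605.06053 — 2 statements merged into one kernel-verified Lean document; each statement's English description precedes it below -/
import Mathlib

section
/- For q not a root of unity, nonnegative integers ν₁, ν₂ and natural n with n ≤ min(ν₁, ν₂), one has ∑_{k=0}^n [n choose k]_q · q^{k(ν₁+ν₂-2n+2)} · [ν₁-k]_q! · [ν₂-n+k]_q! = q^{n(ν₂+1-n)} · [ν₁-n]_q! [ν₂-n]_q! [ν₁+ν₂-n+1]_q! / [ν₁+ν₂-2n+1]_q!. -/
noncomputable section
open Finset

/-- `q` is a nonzero complex number that is not a root of unity. -/
def NotRootOfUnity (q : ℂ) : Prop := q ≠ 0 ∧ ∀ m : ℤ, m ≠ 0 → q ^ m ≠ 1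

/-- The q-integer `[m]_q = (q^m - q^(-m))/(q - q⁻¹)`. -/
def qint (q : ℂ) (m : ℤ) : ℂ := (q ^ m - q ^ (-m)) / (q - q⁻¹)

/-- The q-factorial `[n]_q! = ∏_{m=1}^n [m]_q`. -/
def qfact (q : ℂ) (n : ℕ) : ℂ := ∏ m ∈ Finset.range n, qint q ((m : ℤ) + 1)


/-- The q-binomial coefficient `[n choose k]_q = [n]_q! / ([k]_q! [n-k]_q!)`. -/
def qbinom (q : ℂ) (n k : ℕ) : ℂ := qfact q n / (qfact q k * qfact q (n - k))

/-!
Write `ν₁ = n + a` and `ν₂ = n + b` and induct on `n` for all `a`, `b` at once. The q-Pascal rule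
`[n+1, k+1] = q^(k+1) [n, k+1] + q^(k-n) [n, k]` splits the sum for `n + 1` into the sums for
`(n, a + 1, b)` and `(n, a, b + 1)`, and the two right-hand sides recombine through
`[a+1] + q^(a+b+2) [b+1] = q^(b+1) [a+b+2]`.
-/

theorem qint_add (q : ℂ) (m l : ℤ) :
    qint q (m + l) = q ^ l * qint q m + q ^ (-m) * qint q l := by
  rcases eq_or_ne q 0 with rfl | hq
  · simp [qint]
  simp only [qint, neg_add, zpow_add₀ hq]
  ring

theorem qint_add_zpow_mul_qint (q : ℂ) (m l : ℤ) :
    qint q m + q ^ (m + l) * qint q l = q ^ l * qint q (m + l) := by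
  rcases eq_or_ne q 0 with rfl | hq
  · simp [qint]
  simp only [qint, neg_add, zpow_add₀ hq, zpow_neg]
  field_simp
  ring

@[simp]
theorem qfact_zero (q : ℂ) : qfact q 0 = 1 := by
  simp [qfact]

theorem qfact_succ (q : ℂ) (n : ℕ) : qfact q (n + 1) = qfact q n * qint q (n + 1) := by
  simp [qfact, prod_range_succ]

namespace NotRootOfUnity

variable {q : ℂ}

theorem zpow_sub_zpow_neg_ne_zero (hq : NotRootOfUnity q) {m : ℤ} (hm : m ≠ 0) :
    q ^ m - q ^ (-m) ≠ 0 := by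
  intro h
  apply hq.2 (2 * m) (by omega)
  rw [two_mul, zpow_add₀ hq.1]
  nth_rw 2 [sub_eq_zero.mp h]
  rw [← zpow_add₀ hq.1, add_neg_cancel, zpow_zero]

theorem qint_ne_zero (hq : NotRootOfUnity q) {m : ℤ} (hm : m ≠ 0) : qint q m ≠ 0 :=
  div_ne_zero (hq.zpow_sub_zpow_neg_ne_zero hm)
    (by simpa using hq.zpow_sub_zpow_neg_ne_zero one_ne_zero)

theorem qfact_ne_zero (hq : NotRootOfUnity q) (n : ℕ) : qfact q n ≠ 0 :=
  prod_ne_zero_iff.mpr fun _ _ => hq.qint_ne_zero (by omega)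

end NotRootOfUnity

-- `qbinom q n k = [n]!/[k]!` is not zero for `k > n`, so Pascal's rule needs a padded version.
def qchoose (q : ℂ) (n k : ℕ) : ℂ := if k ≤ n then qbinom q n k else 0

-- The left-hand side of the identity with `ν₁ = n + a` and `ν₂ = n + b`.
def qfactSum (q : ℂ) (n a b : ℕ) : ℂ :=
  ∑ k ∈ range (n + 1),
    qchoose q n k * q ^ ((k : ℤ) * (a + b + 2)) * qfact q (n + a - k) * qfact q (b + k)

section

variable {q : ℂ}

theorem qbinom_self (hq : NotRootOfUnity q) (n : ℕ) : qbinom q n n = 1 := by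
  simp [qbinom, hq.qfact_ne_zero n]

theorem qchoose_zero_right (hq : NotRootOfUnity q) (n : ℕ) : qchoose q n 0 = 1 := by
  simp [qchoose, qbinom, hq.qfact_ne_zero n]

theorem qchoose_succ_self (n : ℕ) : qchoose q n (n + 1) = 0 := by
  simp [qchoose]

theorem qchoose_succ_succ (hq : NotRootOfUnity q) (n k : ℕ) :
    qchoose q (n + 1) (k + 1) =
      q ^ ((k : ℤ) + 1) * qchoose q n (k + 1) + q ^ ((k : ℤ) - n) * qchoose q n k := by
  rcases lt_trichotomy k n with hk | rfl | hk
  · obtain ⟨c, rfl⟩ : ∃ c, n = k + 1 + c := ⟨n - (k + 1), by omega⟩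
    have hqint : qint q (k + 1 + c + 1) =
        q ^ ((k : ℤ) + 1) * qint q (c + 1) + q ^ (-((c : ℤ) + 1)) * qint q (k + 1) := by
      rw [← qint_add]; ring_nf
    simp only [qchoose, qbinom, if_pos (show k + 1 ≤ k + 1 + c + 1 by omega),
      if_pos (show k + 1 ≤ k + 1 + c by omega), if_pos (show k ≤ k + 1 + c by omega),
      show k + 1 + c + 1 - (k + 1) = c + 1 by omega, show k + 1 + c - (k + 1) = c by omega,
      show k + 1 + c - k = c + 1 by omega, qfact_succ]
    have := hq.qfact_ne_zero k
    have := hq.qfact_ne_zero c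
    have := hq.qint_ne_zero (m := k + 1) (by omega)
    have := hq.qint_ne_zero (m := c + 1) (by omega)
    push_cast
    rw [hqint, show (k : ℤ) - (k + 1 + c) = -(c + 1) by ring]
    field_simp
  · simp [qchoose, qbinom_self hq]
  · simp [qchoose, show ¬k ≤ n by omega, show ¬k + 1 ≤ n by omega, show ¬k + 1 ≤ n + 1 by omega]

theorem qfactSum_succ (hq : NotRootOfUnity q) (n a b : ℕ) :
    qfactSum q (n + 1) a b =
      qfactSum q n (a + 1) b + q ^ ((a : ℤ) + b + 2 - n) * qfactSum q n a (b + 1) := by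
  set g : ℕ → ℂ := fun k => qchoose q n k * q ^ ((k : ℤ) * (a + 1 + b + 2)) *
    qfact q (n + (a + 1) - k) * qfact q (b + k)
  set h : ℕ → ℂ := fun k => qchoose q n k * q ^ ((k : ℤ) * (a + (b + 1) + 2)) *
    qfact q (n + a - k) * qfact q (b + 1 + k)
  have hg : qfactSum q n (a + 1) b = ∑ k ∈ range (n + 1), g (k + 1) + g 0 := by
    rw [← sum_range_succ', sum_range_succ, qfactSum]
    simp [g, qchoose_succ_self]
  have hh : qfactSum q n a (b + 1) = ∑ k ∈ range (n + 1), h k := by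
    simp [qfactSum, h]
  have h₀ : qchoose q (n + 1) 0 * q ^ (((0 : ℕ) : ℤ) * (a + b + 2)) * qfact q (n + 1 + a - 0) *
      qfact q (b + 0) = g 0 := by
    simp [g, qchoose_zero_right hq, add_right_comm n 1 a, add_assoc]
  have hpascal : ∀ k, qchoose q (n + 1) (k + 1) * q ^ (((k + 1 : ℕ) : ℤ) * (a + b + 2)) *
      qfact q (n + 1 + a - (k + 1)) * qfact q (b + (k + 1)) =
        g (k + 1) + q ^ ((a : ℤ) + b + 2 - n) * h k := by
    intro k
    have e₁ : q ^ ((k : ℤ) + 1) * q ^ (((k + 1 : ℕ) : ℤ) * (a + b + 2)) =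
        q ^ (((k + 1 : ℕ) : ℤ) * (a + 1 + b + 2)) := by
      rw [← zpow_add₀ hq.1]; push_cast; ring_nf
    have e₂ : q ^ ((k : ℤ) - n) * q ^ (((k + 1 : ℕ) : ℤ) * (a + b + 2)) =
        q ^ ((a : ℤ) + b + 2 - n) * q ^ ((k : ℤ) * (a + (b + 1) + 2)) := by
      rw [← zpow_add₀ hq.1, ← zpow_add₀ hq.1]; push_cast; ring_nf
    simp only [g, h, qchoose_succ_succ hq, show n + 1 + a - (k + 1) = n + a - k by omega,
      show n + (a + 1) - (k + 1) = n + a - k by omega, show b + (k + 1) = b + 1 + k by omega]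
    linear_combination (qfact q (n + a - k) * qfact q (b + 1 + k)) *
      (qchoose q n (k + 1) * e₁ + qchoose q n k * e₂)
  rw [qfactSum, sum_range_succ', sum_congr rfl fun k _ => hpascal k, sum_add_distrib, ← mul_sum,
    hg, hh]
  linear_combination h₀

theorem qfactSum_eq (hq : NotRootOfUnity q) (n a b : ℕ) :
    qfactSum q n a b = q ^ ((n : ℤ) * (b + 1)) *
      (qfact q a * qfact q b * qfact q (a + b + n + 1) / qfact q (a + b + 1)) := by
  induction n generalizing a b with
  | zero => simp [qfactSum, qchoose_zero_right hq, hq.qfact_ne_zero]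
  | succ n ih =>
    have hqint := qint_add_zpow_mul_qint q (a + 1) (b + 1)
    have e₁ : q ^ (((n + 1 : ℕ) : ℤ) * (b + 1)) = q ^ ((n : ℤ) * (b + 1)) * q ^ ((b : ℤ) + 1) := by
      rw [← zpow_add₀ hq.1]; push_cast; ring_nf
    have e₂ : q ^ ((a : ℤ) + b + 2 - n) * q ^ ((n : ℤ) * ((b + 1 : ℕ) + 1)) =
        q ^ ((n : ℤ) * (b + 1)) * q ^ ((a : ℤ) + 1 + (b + 1)) := by
      rw [← zpow_add₀ hq.1, ← zpow_add₀ hq.1]; push_cast; ring_nf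
    rw [qfactSum_succ hq, ih, ih, e₁, ← mul_assoc, e₂,
      show a + 1 + b + n + 1 = a + b + (n + 1) + 1 by omega,
      show a + (b + 1) + n + 1 = a + b + (n + 1) + 1 by omega,
      show a + 1 + b + 1 = a + b + 1 + 1 by omega, show a + (b + 1) + 1 = a + b + 1 + 1 by omega,
      qfact_succ q a, qfact_succ q b, qfact_succ q (a + b + 1)]
    have := hq.qfact_ne_zero (a + b + 1)
    have := hq.qint_ne_zero (m := a + 1 + (b + 1)) (by omega)
    push_cast
    rw [show (a : ℤ) + b + 1 + 1 = a + 1 + (b + 1) by ring]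
    field_simp
    linear_combination (q ^ ((n : ℤ) * (b + 1)) * qfact q a * qfact q b *
      qfact q (a + b + (n + 1) + 1)) * hqint

end

/-- The q-combinatorial identity
`∑_{k=0}^n [n choose k]_q q^{k(ν₁+ν₂-2n+2)} [ν₁-k]_q! [ν₂-n+k]_q!
  = q^{n(ν₂+1-n)} [ν₁-n]_q! [ν₂-n]_q! [ν₁+ν₂-n+1]_q! / [ν₁+ν₂-2n+1]_q!`. -/
theorem q_identity_d (q : ℂ) (hq : NotRootOfUnity q) (ν₁ ν₂ n : ℕ)
    (h₁ : n ≤ ν₁) (h₂ : n ≤ ν₂) :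
    ∑ k ∈ Finset.range (n + 1),
        qbinom q n k * q ^ ((k : ℤ) * ((ν₁ : ℤ) + (ν₂ : ℤ) - 2 * (n : ℤ) + 2)) *
          qfact q (ν₁ - k) * qfact q (ν₂ - n + k)
      = q ^ ((n : ℤ) * ((ν₂ : ℤ) + 1 - (n : ℤ))) *
          (qfact q (ν₁ - n) * qfact q (ν₂ - n) * qfact q (ν₁ + ν₂ - n + 1) /
            qfact q (ν₁ + ν₂ - 2 * n + 1)) := by
  obtain ⟨a, rfl⟩ : ∃ a, ν₁ = n + a := ⟨ν₁ - n, by omega⟩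
  obtain ⟨b, rfl⟩ : ∃ b, ν₂ = n + b := ⟨ν₂ - n, by omega⟩
  calc _ = qfactSum q n a b := by
        refine sum_congr rfl fun k hk => ?_
        rw [qchoose, if_pos (Nat.lt_succ_iff.mp (mem_range.mp hk)),
          show n + b - n + k = b + k by omega]
        push_cast
        ring_nf
    _ = _ := by
        rw [qfactSum_eq hq, show n + a + (n + b) - n + 1 = a + b + n + 1 by omega,
          show n + a + (n + b) - 2 * n + 1 = a + b + 1 by omega, Nat.add_sub_cancel_left,
          Nat.add_sub_cancel_left]
        push_cast
        ring_nf
end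
end

section
/- Let ς = (s₁,...,s_p) ∈ ℤ_{>0}^p with n = s₁+···+s_p > s ≥ 0, s ≡ n (mod 2). If v ∈ M_{d_p} ⊗ ··· ⊗ M_{d_1} (d_i = s_i+1) satisfies E.v = 0, K.v = q^s v, and all generalized projections π̃_j^(δ)(v) = 0 for every j ∈ {1,...,p-1}, every m ∈ {1,...,min(s_j,s_{j+1})}, and δ = s_j+s_{j+1}+1-2m, then v = 0. -/
noncomputable section
open Finset

/-- Coefficient model of the tensor product `M_{d_p} ⊗ ⋯ ⊗ M_{d_1}` of irreducible
`U_q(sl₂)`-modules: a vector is the coefficient function of the basis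
`e_{l(0)} ⊗ ⋯ ⊗ e_{l(p-1)}` (the index `i : Fin p` labels the `i`-th tensorand from the
left, which is the irreducible of dimension `d i`). -/
abbrev VG (p : ℕ) (d : Fin p → ℕ) := ((i : Fin p) → Fin (d i)) → ℂ

/-- Action of `E` via `Δ^(p)(E) = ∑ᵢ 1^{⊗(i-1)} ⊗ E ⊗ K^{⊗(p-i)}` (the first coproduct
leg acts on the leftmost tensorand; in `M_d`: `E.e_l = [l]_q [d-l]_q e_{l-1}`,
`K.e_l = q^{d-1-2l} e_l`). -/
def EactG (q : ℂ) (p : ℕ) (d : Fin p → ℕ) (v : VG p d) : VG p d :=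
  fun m => ∑ i : Fin p,
    (∏ j : Fin p, if i < j then q ^ (((d j : ℤ) - 1) - 2 * (m j : ℤ)) else 1) *
      qint q ((m i : ℤ) + 1) * qint q (((d i : ℤ) - 1) - (m i : ℤ)) *
      (if h : (m i : ℕ) + 1 < d i then v (Function.update m i ⟨(m i : ℕ) + 1, h⟩) else 0)

/-- Action of `F` via `Δ^(p)(F) = ∑ᵢ (K⁻¹)^{⊗(i-1)} ⊗ F ⊗ 1^{⊗(p-i)}`
(in `M_d`: `F.e_l = e_{l+1}`, `F.e_{d-1} = 0`). -/
def FactG (q : ℂ) (p : ℕ) (d : Fin p → ℕ) (v : VG p d) : VG p d :=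
  fun m => ∑ i : Fin p,
    (∏ j : Fin p, if j < i then q ^ (2 * (m j : ℤ) - ((d j : ℤ) - 1)) else 1) *
      (if h : 0 < (m i : ℕ) then
        v (Function.update m i ⟨(m i : ℕ) - 1, by have := (m i).isLt; omega⟩) else 0)

/-- Action of `K` (diagonal). -/
def KactG (q : ℂ) (p : ℕ) (d : Fin p → ℕ) (v : VG p d) : VG p d :=
  fun m => (∏ j : Fin p, q ^ (((d j : ℤ) - 1) - 2 * (m j : ℤ))) * v m

/-- The vector `e₀ ⊗ ⋯ ⊗ e₀`. -/
def e0G (p : ℕ) (d : Fin p → ℕ) : VG p d := fun m => if ∀ i, (m i : ℕ) = 0 then 1 else 0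

/-- Action of `F` on the coefficient model of a two-fold tensor product
`M_{dL} ⊗ M_{dR}` (first coproduct leg on the left tensorand). -/
def FactP (q : ℂ) (dL dR : ℕ) (v : Fin dL × Fin dR → ℂ) : Fin dL × Fin dR → ℂ :=
  fun x =>
    (if h : 0 < (x.1 : ℕ) then
        v (⟨(x.1 : ℕ) - 1, by have := x.1.isLt; omega⟩, x.2) else 0)
      + q ^ (2 * (x.1 : ℤ) - ((dL : ℤ) - 1)) *
        (if h : 0 < (x.2 : ℕ) then
          v (x.1, ⟨(x.2 : ℕ) - 1, by have := x.2.isLt; omega⟩) else 0)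

/-- The highest weight vector `e₀ ⊗ e₀` of `M_{dL} ⊗ M_{dR}`. -/
def e0P (dL dR : ℕ) : Fin dL × Fin dR → ℂ :=
  fun x => if (x.1 : ℕ) = 0 ∧ (x.2 : ℕ) = 0 then 1 else 0

/-- The basis `F^t.(e₀ ⊗ e₀)` of the top Clebsch–Gordan summand
`M_{dL+dR-1} ⊂ M_{dL} ⊗ M_{dR}`. -/
def thetaP (q : ℂ) (dL dR t : ℕ) : Fin dL × Fin dR → ℂ := (FactP q dL dR)^[t] (e0P dL dR)

/-- Embed a vector `w` of the pair of tensorands at positions `j`, `j₁` into the full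
tensor product, the remaining tensor positions being filled with the basis vectors
prescribed by `g`. -/
def embedPair (p : ℕ) (d : Fin p → ℕ) (j j₁ : Fin p)
    (g : (i : Fin p) → Fin (d i)) (w : Fin (d j) × Fin (d j₁) → ℂ) : VG p d :=
  fun m => (if ∀ i, i ≠ j → i ≠ j₁ → m i = g i then 1 else 0) * w (m j, m j₁)

/-- The subspace of the tensor product consisting of vectors whose component in every
non-top Clebsch–Gordan summand of the adjacent pair of tensorands at positions
`j`, `j+1` vanishes, i.e. the subspace
`(⋯) ⊗ M_{d_j+d_{j+1}-1} ⊗ (⋯)`: the span of vectors carrying an element of the top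
summand (spanned by the `F`-iterates of `e₀ ⊗ e₀`) in positions `j`, `j+1` and basis
vectors elsewhere.  Equivalently: all generalized projections `π̃_j^(δ)` with
`δ = s_j + s_{j+1} + 1 - 2m`, `m ≥ 1`, annihilate the vector. -/
def TopPairCG (q : ℂ) (p : ℕ) (d : Fin p → ℕ) (j : ℕ) (hj : j + 1 < p) :
    Submodule ℂ (VG p d) :=
  Submodule.span ℂ
    {v | ∃ (g : (i : Fin p) → Fin (d i)) (t : ℕ),
      v = embedPair p d ⟨j, by omega⟩ ⟨j + 1, hj⟩ g
            (thetaP q (d ⟨j, by omega⟩) (d ⟨j + 1, hj⟩) t)}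

/-!
Write `∑ᵢ (dᵢ - 1) = s + 2r`, so `r ≥ 1`. The `K`-eigenvalue confines `v` to the basis vectors
`e_{m 0} ⊗ ⋯ ⊗ e_{m (p-1)}` with `∑ mᵢ = r`. Lying in the top summand of the pair `j, j+1` means
that `v` obeys, in the coordinates `(m_j, m_{j+1})`, the same exchange relations as the coefficients
of `F^t.(e₀ ⊗ e₀)`; the coefficients `topCoeff` of `F^r.(e₀ ⊗ ⋯ ⊗ e₀)` obey them too. Moving one
unit of weight between adjacent positions connects all tuples with sum `r` (each reduces to the
unique packed one, filled from the left), so `v = c • topCoeff`. Finally every summand of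
`E.(c • topCoeff)` at a tuple of sum `r - 1` telescopes, and the sum is `c` times a nonzero multiple
of `q^{n-2(r-1)} - q^{-n}`, where `n = ∑ᵢ (dᵢ - 1)`; hence `c = 0`.
-/

lemma prod_zpow_eq_zpow_sum {G₀ ι : Type*} [CommGroupWithZero G₀] {a : G₀} (ha : a ≠ 0)
    (s : Finset ι) (f : ι → ℤ) : ∏ i ∈ s, a ^ f i = a ^ ∑ i ∈ s, f i := by
  classical
  induction s using Finset.cons_induction with
  | empty => simp
  | cons i s hi ih => rw [prod_cons, sum_cons, ih, ← zpow_add₀ ha]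

namespace NotRootOfUnity

variable {q : ℂ}

lemma ne_zero (hq : NotRootOfUnity q) : q ≠ 0 := hq.1

lemma zpow_inj (hq : NotRootOfUnity q) {a b : ℤ} (h : q ^ a = q ^ b) : a = b := by
  by_contra hab
  refine hq.2 (a - b) (sub_ne_zero.mpr hab) ?_
  rw [zpow_sub₀ hq.ne_zero, h, div_self (zpow_ne_zero _ hq.ne_zero)]

lemma sq_sub_one_ne_zero (hq : NotRootOfUnity q) : q ^ 2 - 1 ≠ 0 := by
  intro h
  have := hq.zpow_inj (a := 2) (b := 0) (by rw [zpow_zero, zpow_ofNat]; linear_combination h)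
  omega

end NotRootOfUnity

namespace TopPairs

open Function

variable {q : ℂ} {p : ℕ} {d : Fin p → ℕ}

def qsqInt (q : ℂ) (n : ℕ) : ℂ := ∑ i ∈ range n, (q ^ 2) ^ i

lemma qsqInt_mul_sq_sub_one (q : ℂ) (n : ℕ) : qsqInt q n * (q ^ 2 - 1) = q ^ (2 * n) - 1 := by
  rw [qsqInt, geom_sum_mul, pow_mul]

lemma qsqInt_ne_zero (hq : NotRootOfUnity q) {n : ℕ} (hn : n ≠ 0) : qsqInt q n ≠ 0 := by
  intro h
  have := qsqInt_mul_sq_sub_one q n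
  rw [h, zero_mul, eq_comm, sub_eq_zero, ← zpow_natCast, ← zpow_zero q] at this
  have := hq.zpow_inj this
  omega

lemma qsqInt_add (q : ℂ) (a b : ℕ) : qsqInt q (a + b) = qsqInt q a + q ^ (2 * a) * qsqInt q b := by
  rw [qsqInt, qsqInt, qsqInt, sum_range_add, mul_sum, pow_mul]
  simp only [pow_add]

lemma qint_natCast (hq : NotRootOfUnity q) (a : ℕ) :
    qint q a = q ^ (1 - (a : ℤ)) * qsqInt q a := by
  have hq0 := hq.ne_zero
  have hden : q - q⁻¹ ≠ 0 := by
    rw [← mul_ne_zero_iff_right hq0, sub_mul, inv_mul_cancel₀ hq0, ← sq]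
    exact hq.sq_sub_one_ne_zero
  rw [qint, div_eq_iff hden]
  calc q ^ (a : ℤ) - q ^ (-(a : ℤ))
      = q ^ (-(a : ℤ)) * (q ^ (2 * a) - 1) := by
        rw [mul_sub, mul_one, ← zpow_natCast, ← zpow_add₀ hq0]; push_cast; ring_nf
    _ = q ^ (1 - (a : ℤ)) * qsqInt q a * (q - q⁻¹) := by
        rw [← qsqInt_mul_sq_sub_one, sub_eq_neg_add (1 : ℤ), zpow_add₀ hq0, zpow_one]
        field_simp

def qsqFactorial (q : ℂ) (n : ℕ) : ℂ := ∏ k ∈ range n, qsqInt q (k + 1)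

@[simp] lemma qsqFactorial_zero : qsqFactorial q 0 = 1 := rfl

lemma qsqFactorial_succ (q : ℂ) (n : ℕ) :
    qsqFactorial q (n + 1) = qsqFactorial q n * qsqInt q (n + 1) := prod_range_succ _ _

lemma qsqFactorial_ne_zero (hq : NotRootOfUnity q) (n : ℕ) : qsqFactorial q n ≠ 0 :=
  prod_ne_zero_iff.mpr fun _ _ => qsqInt_ne_zero hq (Nat.succ_ne_zero _)

section Update

variable {ι M : Type*} [Fintype ι] [DecidableEq ι] [CommMonoid M] {β : ι → Type*}

@[to_additive]
lemma prod_apply_update_mul (f : (i : ι) → β i → M) (m : ∀ i, β i) (J : ι) (a : β J) :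
    (∏ i, f i (update m J a i)) * f J (m J) = (∏ i, f i (m i)) * f J a := by
  simp only [apply_update (fun k => f k) m J a]
  rw [prod_update_of_mem (mem_univ J), sdiff_singleton_eq_erase,
    ← mul_prod_erase univ (fun k => f k (m k)) (mem_univ J)]
  ac_rfl

@[to_additive]
lemma prod_apply_update_update_mul (f : (i : ι) → β i → M) (m : ∀ i, β i) {J J₁ : ι}
    (h : J₁ ≠ J) (a : β J) (b : β J₁) :
    (∏ i, f i (update (update m J a) J₁ b i)) * (f J (m J) * f J₁ (m J₁))
      = (∏ i, f i (m i)) * (f J a * f J₁ b) := by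
  have e₁ := prod_apply_update_mul f (update m J a) J₁ b
  have e₂ := prod_apply_update_mul f m J a
  rw [update_of_ne h] at e₁
  calc (∏ i, f i (update (update m J a) J₁ b i)) * (f J (m J) * f J₁ (m J₁))
      = (∏ i, f i (update (update m J a) J₁ b i)) * f J₁ (m J₁) * f J (m J) := by ac_rfl
    _ = (∏ i, f i (update m J a i)) * f J (m J) * f J₁ b := by rw [e₁]; ac_rfl
    _ = _ := by rw [e₂]; ac_rfl

end Update

def pairTopCoeff (q : ℂ) (dL a b : ℕ) : ℂ :=
  q ^ (-(b : ℤ) * ((dL : ℤ) - 1)) *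
    (qsqFactorial q (a + b) / (qsqFactorial q a * qsqFactorial q b))

lemma pairTopCoeff_ne_zero (hq : NotRootOfUnity q) (dL a b : ℕ) : pairTopCoeff q dL a b ≠ 0 :=
  mul_ne_zero (zpow_ne_zero _ hq.ne_zero) <| div_ne_zero (qsqFactorial_ne_zero hq _)
    (mul_ne_zero (qsqFactorial_ne_zero hq _) (qsqFactorial_ne_zero hq _))

lemma pairTopCoeff_succ_succ (hq : NotRootOfUnity q) (dL a b : ℕ) :
    pairTopCoeff q dL (a + 1) (b + 1) = pairTopCoeff q dL a (b + 1) +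
      q ^ (2 * ((a : ℤ) + 1) - ((dL : ℤ) - 1)) * pairTopCoeff q dL (a + 1) b := by
  have hq0 := hq.ne_zero
  have hpow : q ^ (2 * ((a : ℤ) + 1) - ((dL : ℤ) - 1)) * q ^ (-(b : ℤ) * ((dL : ℤ) - 1))
      = q ^ (-((b + 1 : ℕ) : ℤ) * ((dL : ℤ) - 1)) * q ^ (2 * (a + 1)) := by
    rw [← zpow_natCast q (2 * (a + 1)), ← zpow_add₀ hq0, ← zpow_add₀ hq0]
    push_cast; ring_nf
  have hsum : qsqInt q (a + b + 1 + 1) =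
      qsqInt q (a + 1) + q ^ (2 * (a + 1)) * qsqInt q (b + 1) := by
    rw [show a + b + 1 + 1 = (a + 1) + (b + 1) by omega, qsqInt_add]
  have := qsqFactorial_ne_zero hq a
  have := qsqFactorial_ne_zero hq b
  have := qsqInt_ne_zero hq a.succ_ne_zero
  have := qsqInt_ne_zero hq b.succ_ne_zero
  simp only [pairTopCoeff, ← mul_assoc, hpow]
  rw [show a + 1 + (b + 1) = a + b + 1 + 1 by omega, show a + (b + 1) = a + b + 1 by omega,
    show a + 1 + b = a + b + 1 by omega, qsqFactorial_succ q (a + b + 1), qsqFactorial_succ q a,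
    qsqFactorial_succ q b, hsum]
  field_simp

lemma pairTopCoeff_rec (hq : NotRootOfUnity q) (dL : ℕ) {a b : ℕ} (hab : a + b ≠ 0) :
    pairTopCoeff q dL a b = (if 0 < a then pairTopCoeff q dL (a - 1) b else 0) +
      q ^ (2 * (a : ℤ) - ((dL : ℤ) - 1)) * (if 0 < b then pairTopCoeff q dL a (b - 1) else 0) := by
  have hF := qsqFactorial_ne_zero hq
  rcases a with _ | a <;> rcases b with _ | b
  · omega
  · simp only [pairTopCoeff, qsqFactorial_zero, zero_add, one_mul, div_self (hF _), mul_one,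
      lt_irrefl, if_false, Nat.succ_pos, if_true, Nat.add_sub_cancel, ← zpow_add₀ hq.ne_zero]
    push_cast; ring_nf
  · simp [pairTopCoeff, div_self (hF _)]
  · simpa using pairTopCoeff_succ_succ hq dL a b

theorem thetaP_apply (hq : NotRootOfUnity q) (dL dR t : ℕ) (x : Fin dL × Fin dR) :
    thetaP q dL dR t x = if (x.1 : ℕ) + x.2 = t then pairTopCoeff q dL x.1 x.2 else 0 := by
  induction t generalizing x with
  | zero =>
    by_cases h : (x.1 : ℕ) = 0 ∧ (x.2 : ℕ) = 0
    · simp [thetaP, e0P, h, pairTopCoeff]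
    · simp only [thetaP, Function.iterate_zero_apply, e0P, if_neg h]
      split_ifs <;> first | rfl | omega
  | succ t ih =>
    rw [thetaP, Function.iterate_succ_apply', ← thetaP, FactP]
    simp only [ih]
    by_cases h : (x.1 : ℕ) + x.2 = t + 1
    · rw [if_pos h, pairTopCoeff_rec hq dL (a := x.1) (b := x.2) (by omega)]
      congr 1 <;> split_ifs <;> first | rfl | omega
    · rw [if_neg h]
      split_ifs <;> first | omega | ring

theorem mul_pairTopCoeff_of_mem_topPairCG (hq : NotRootOfUnity q) {v : VG p d} {j : ℕ}
    {hj : j + 1 < p} (hv : v ∈ TopPairCG q p d j hj) (m : (i : Fin p) → Fin (d i))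
    (a : Fin (d ⟨j, by omega⟩)) (b : Fin (d ⟨j + 1, hj⟩))
    (hab : (a : ℕ) + b = m ⟨j, by omega⟩ + m ⟨j + 1, hj⟩) :
    v m * pairTopCoeff q (d ⟨j, by omega⟩) a b =
      v (update (update m ⟨j, by omega⟩ a) ⟨j + 1, hj⟩ b) *
        pairTopCoeff q (d ⟨j, by omega⟩) (m ⟨j, by omega⟩) (m ⟨j + 1, hj⟩) := by
  have hne : (⟨j + 1, hj⟩ : Fin p) ≠ ⟨j, by omega⟩ := by simp
  induction hv using Submodule.span_induction with
  | mem w hw =>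
    obtain ⟨g, t, rfl⟩ := hw
    have hrest : (∀ i, i ≠ ⟨j, by omega⟩ → i ≠ ⟨j + 1, hj⟩ →
        update (update m ⟨j, by omega⟩ a) ⟨j + 1, hj⟩ b i = g i) ↔
        ∀ i, i ≠ ⟨j, by omega⟩ → i ≠ ⟨j + 1, hj⟩ → m i = g i :=
      forall_congr' fun i => imp_congr_right fun h₀ => imp_congr_right fun h₁ => by
        rw [update_of_ne h₁, update_of_ne h₀]
    simp only [embedPair, hrest, update_self, update_of_ne hne.symm, thetaP_apply hq, hab]
    split_ifs <;> ring
  | zero => simp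
  | add w₁ w₂ _ _ h₁ h₂ => simp only [Pi.add_apply, add_mul, h₁, h₂]
  | smul c w _ h => simp only [Pi.smul_apply, smul_eq_mul, mul_assoc, h]

def weightBelow (d : Fin p → ℕ) (k : ℕ) : ℤ :=
  ∑ j : Fin p, if (j : ℕ) < k then (d j : ℤ) - 1 else 0

lemma weightBelow_succ (d : Fin p → ℕ) (i : Fin p) :
    weightBelow d (i + 1) = weightBelow d i + ((d i : ℤ) - 1) := by
  rw [weightBelow, weightBelow, ← Fintype.sum_ite_eq' i (fun j => (d j : ℤ) - 1),
    ← sum_add_distrib]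
  refine sum_congr rfl fun j _ => ?_
  rcases eq_or_ne j i with rfl | h
  · simp
  · have : (j : ℕ) ≠ i := Fin.val_ne_of_ne h
    simp only [h, if_false, add_zero, Nat.lt_succ_iff_lt_or_eq, this, or_false]

/-- The coefficients of `F^r.(e₀ ⊗ ⋯ ⊗ e₀)`, `r = ∑ᵢ mᵢ`, in the basis
`e_{m 0} ⊗ ⋯ ⊗ e_{m (p-1)}`. -/
def topCoeff (q : ℂ) (d : Fin p → ℕ) (m : (i : Fin p) → Fin (d i)) : ℂ :=
  q ^ (-∑ i, ((m i : ℕ) : ℤ) * weightBelow d i) *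
    (qsqFactorial q (∑ i, (m i : ℕ)) / ∏ i, qsqFactorial q (m i))

lemma topCoeff_ne_zero (hq : NotRootOfUnity q) (m : (i : Fin p) → Fin (d i)) :
    topCoeff q d m ≠ 0 :=
  mul_ne_zero (zpow_ne_zero _ hq.ne_zero) <| div_ne_zero (qsqFactorial_ne_zero hq _)
    (prod_ne_zero_iff.mpr fun _ _ => qsqFactorial_ne_zero hq _)

theorem topCoeff_mul_pairTopCoeff (hq : NotRootOfUnity q) {J J₁ : Fin p}
    (hJ : (J₁ : ℕ) = J + 1) (m : (i : Fin p) → Fin (d i)) (a : Fin (d J)) (b : Fin (d J₁))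
    (hab : (a : ℕ) + b = m J + m J₁) :
    topCoeff q d m * pairTopCoeff q (d J) a b =
      topCoeff q d (update (update m J a) J₁ b) * pairTopCoeff q (d J) (m J) (m J₁) := by
  have hq0 := hq.ne_zero
  have hne : J₁ ≠ J := fun h => by rw [h] at hJ; omega
  have hS := sum_apply_update_update_add (fun i (x : Fin (d i)) => (x : ℕ)) m hne a b
  have hE := sum_apply_update_update_add
    (fun i (x : Fin (d i)) => ((x : ℕ) : ℤ) * weightBelow d i) m hne a b
  have hQ := prod_apply_update_update_mul (fun i (x : Fin (d i)) => qsqFactorial q x) m hne a b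
  have hW : weightBelow d J₁ = weightBelow d J + ((d J : ℤ) - 1) := by
    rw [hJ, weightBelow_succ]
  have habZ : ((a : ℕ) : ℤ) + (b : ℕ) = (m J : ℕ) + (m J₁ : ℕ) := by exact_mod_cast hab
  have hS' : ∑ i, (update (update m J a) J₁ b i : ℕ) = ∑ i, (m i : ℕ) := by omega
  have hexp : -(∑ i, ((m i : ℕ) : ℤ) * weightBelow d i) + -((b : ℕ) : ℤ) * ((d J : ℤ) - 1) =
      -(∑ i, ((update (update m J a) J₁ b i : ℕ) : ℤ) * weightBelow d i) +
        -((m J₁ : ℕ) : ℤ) * ((d J : ℤ) - 1) := by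
    linear_combination hE + (((b : ℕ) : ℤ) - (m J₁ : ℕ)) * hW + weightBelow d J * habZ
  unfold topCoeff pairTopCoeff
  rw [hab, hS']
  calc _ = q ^ (-(∑ i, ((m i : ℕ) : ℤ) * weightBelow d i) + -((b : ℕ) : ℤ) * ((d J : ℤ) - 1)) *
        (qsqFactorial q (∑ i, (m i : ℕ)) * qsqFactorial q (m J + m J₁)) /
        ((∏ i, qsqFactorial q (m i)) * (qsqFactorial q a * qsqFactorial q b)) := by
        rw [zpow_add₀ hq0]; ring
    _ = _ := by
      rw [← hQ, hexp, zpow_add₀ hq0]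
      ring

lemma topCoeff_update_succ (hq : NotRootOfUnity q) (m : (i : Fin p) → Fin (d i)) (i : Fin p)
    (h : (m i : ℕ) + 1 < d i) :
    topCoeff q d (update m i ⟨m i + 1, h⟩) * qsqInt q (m i + 1) =
      topCoeff q d m * q ^ (-weightBelow d i) * qsqInt q (∑ k, (m k : ℕ) + 1) := by
  have hq0 := hq.ne_zero
  have hS := sum_apply_update_add (fun k (x : Fin (d k)) => (x : ℕ)) m i ⟨_, h⟩
  have hE := sum_apply_update_add (fun k (x : Fin (d k)) => ((x : ℕ) : ℤ) * weightBelow d k)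
    m i ⟨_, h⟩
  have hQ := prod_apply_update_mul (fun k (x : Fin (d k)) => qsqFactorial q x) m i ⟨_, h⟩
  simp only at hS hE
  simp only [qsqFactorial_succ] at hQ
  have hQ' : ∏ k, qsqFactorial q (update m i ⟨_, h⟩ k) =
      (∏ k, qsqFactorial q (m k)) * qsqInt q (m i + 1) :=
    mul_right_cancel₀ (qsqFactorial_ne_zero hq _) (by rw [hQ]; ring)
  have hexp : -∑ k, ((update m i ⟨_, h⟩ k : ℕ) : ℤ) * weightBelow d k =
      -∑ k, ((m k : ℕ) : ℤ) * weightBelow d k + -weightBelow d i := by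
    push_cast at hE; linear_combination -hE
  have := qsqInt_ne_zero hq (m i).val.succ_ne_zero
  have := prod_ne_zero_iff.mpr fun k (_ : k ∈ univ) => qsqFactorial_ne_zero hq (m k)
  unfold topCoeff
  rw [show ∑ k, (update m i ⟨_, h⟩ k : ℕ) = ∑ k, (m k : ℕ) + 1 by omega, hexp, hQ',
    qsqFactorial_succ, zpow_add₀ hq0]
  field_simp

/-- The exponent in which the summands of `E` applied to `topCoeff` telescope. -/
def tailWeight (d : Fin p → ℕ) (m : (i : Fin p) → Fin (d i)) (k : ℕ) : ℤ :=
  (∑ j : Fin p, if k ≤ (j : ℕ) then (d j : ℤ) - 1 - 2 * (m j : ℕ) else 0) - weightBelow d k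

lemma tailWeight_zero (m : (i : Fin p) → Fin (d i)) :
    tailWeight d m 0 = ∑ j, ((d j : ℤ) - 1 - 2 * (m j : ℕ)) := by
  simp [tailWeight, weightBelow]

lemma tailWeight_length (m : (i : Fin p) → Fin (d i)) :
    tailWeight d m p = -∑ j, ((d j : ℤ) - 1) := by
  simp [tailWeight, weightBelow, not_le.mpr (Fin.is_lt _)]

lemma tailWeight_eq_succ_add (m : (i : Fin p) → Fin (d i)) (i : Fin p) :
    tailWeight d m i = tailWeight d m (i + 1) + 2 * ((d i : ℤ) - 1 - (m i : ℕ)) := by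
  have hsplit : ∑ j : Fin p, (if (i : ℕ) ≤ j then (d j : ℤ) - 1 - 2 * (m j : ℕ) else 0) =
      (∑ j : Fin p, if (i : ℕ) + 1 ≤ j then (d j : ℤ) - 1 - 2 * (m j : ℕ) else 0) +
        ((d i : ℤ) - 1 - 2 * (m i : ℕ)) := by
    rw [← Fintype.sum_ite_eq' i (fun j => (d j : ℤ) - 1 - 2 * (m j : ℕ)), ← sum_add_distrib]
    refine sum_congr rfl fun j _ => ?_
    rcases eq_or_ne j i with rfl | h
    · simp
    · have : (j : ℕ) ≠ i := Fin.val_ne_of_ne h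
      simp only [h, if_false, add_zero]
      congr 1
      exact propext ⟨fun _ => by omega, fun _ => by omega⟩
  rw [tailWeight, tailWeight, weightBelow_succ, hsplit]
  ring

lemma tailWeight_succ_add_weightBelow (m : (i : Fin p) → Fin (d i)) (i : Fin p) :
    tailWeight d m (i + 1) + weightBelow d (i + 1) =
      ∑ j : Fin p, if i < j then (d j : ℤ) - 1 - 2 * (m j : ℕ) else 0 := by
  rw [tailWeight, sub_add_cancel]
  rfl

theorem EactG_summand_topCoeff (hq : NotRootOfUnity q) (m : (i : Fin p) → Fin (d i))
    (i : Fin p) :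
    (∏ j : Fin p, if i < j then q ^ (((d j : ℤ) - 1) - 2 * (m j : ℤ)) else 1) *
      qint q ((m i : ℤ) + 1) * qint q (((d i : ℤ) - 1) - (m i : ℤ)) *
      (if h : (m i : ℕ) + 1 < d i then topCoeff q d (update m i ⟨(m i : ℕ) + 1, h⟩) else 0) *
      (q ^ 2 - 1) =
    topCoeff q d m * qsqInt q (∑ k, (m k : ℕ) + 1) * q *
      (q ^ tailWeight d m i - q ^ tailWeight d m (i + 1)) := by
  have hq0 := hq.ne_zero
  have hT := tailWeight_eq_succ_add m i
  split_ifs with h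
  swap
  · rw [hT, show (d i : ℤ) - 1 - (m i : ℕ) = 0 by omega]
    simp
  obtain ⟨k, hk⟩ : ∃ k : ℕ, (k : ℤ) = (d i : ℤ) - 1 - (m i : ℕ) := ⟨d i - 1 - m i, by omega⟩
  have hK : (∏ j : Fin p, if i < j then q ^ (((d j : ℤ) - 1) - 2 * (m j : ℤ)) else 1) =
      q ^ (tailWeight d m (i + 1) + weightBelow d (i + 1)) := by
    rw [tailWeight_succ_add_weightBelow, ← prod_zpow_eq_zpow_sum hq0]
    exact prod_congr rfl fun j _ => by split_ifs <;> simp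
  have hqint₁ : qint q ((m i : ℤ) + 1) = q ^ (-((m i : ℕ) : ℤ)) * qsqInt q (m i + 1) := by
    rw [show ((m i : ℤ) + 1) = (((m i : ℕ) + 1 : ℕ) : ℤ) by push_cast; ring, qint_natCast hq]
    congr 2
    push_cast
    ring
  have hqint₂ : qint q (((d i : ℤ) - 1) - (m i : ℤ)) = q ^ (1 - (k : ℤ)) * qsqInt q k := by
    rw [← qint_natCast hq, hk]
  have hexp₁ : q ^ (tailWeight d m (i + 1) + weightBelow d (i + 1)) * q ^ (-((m i : ℕ) : ℤ)) *
      q ^ (1 - (k : ℤ)) * q ^ (-weightBelow d i) = q ^ (tailWeight d m (i + 1) + 1) := by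
    simp only [← zpow_add₀ hq0]
    rw [weightBelow_succ]
    congr 1
    linear_combination -hk
  have hexp₂ : q ^ tailWeight d m i = q ^ tailWeight d m (i + 1) * q ^ (2 * k) := by
    rw [hT, zpow_add₀ hq0, ← zpow_natCast, ← hk]
    push_cast
    rfl
  rw [hK, hqint₁, hqint₂]
  calc _ = q ^ (tailWeight d m (i + 1) + weightBelow d (i + 1)) * q ^ (-((m i : ℕ) : ℤ)) *
        q ^ (1 - (k : ℤ)) * (qsqInt q k * (q ^ 2 - 1)) *
        (topCoeff q d (update m i ⟨(m i : ℕ) + 1, h⟩) * qsqInt q (m i + 1)) := by ring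
    _ = q ^ (tailWeight d m (i + 1) + 1) * (q ^ (2 * k) - 1) *
        (topCoeff q d m * qsqInt q (∑ k, (m k : ℕ) + 1)) := by
        rw [qsqInt_mul_sq_sub_one, topCoeff_update_succ hq, ← hexp₁]
        ring
    _ = _ := by
        rw [hexp₂, zpow_add_one₀ hq0]
        ring

theorem EactG_apply_mul_sq_sub_one (hq : NotRootOfUnity q) {v : VG p d} {c : ℂ}
    (m₀ : (i : Fin p) → Fin (d i))
    (hv : ∀ m : (i : Fin p) → Fin (d i), ∑ i, (m i : ℕ) = ∑ i, (m₀ i : ℕ) + 1 →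
      v m = c * topCoeff q d m) :
    EactG q p d v m₀ * (q ^ 2 - 1) = c * topCoeff q d m₀ * qsqInt q (∑ i, (m₀ i : ℕ) + 1) * q *
      (q ^ ∑ j, ((d j : ℤ) - 1 - 2 * (m₀ j : ℕ)) - q ^ (-∑ j, ((d j : ℤ) - 1))) := by
  rw [← tailWeight_zero, ← tailWeight_length, ← sum_range_sub' (fun k => q ^ tailWeight d m₀ k),
    ← Fin.sum_univ_eq_sum_range (fun k => q ^ tailWeight d m₀ k - q ^ tailWeight d m₀ (k + 1)),
    mul_sum, EactG, sum_mul]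
  refine sum_congr rfl fun i _ => ?_
  have key := EactG_summand_topCoeff hq m₀ i
  split_ifs at key ⊢ with h
  · have := sum_apply_update_add (fun k (x : Fin (d k)) => (x : ℕ)) m₀ i ⟨_, h⟩
    simp only at this
    rw [hv _ (by omega)]
    linear_combination c * key
  · linear_combination c * key

lemma exists_sum_eq (hd : ∀ i, 0 < d i) (t : ℕ) :
    ∃ m : (i : Fin p) → Fin (d i), ∑ i, (m i : ℕ) = ∑ i, (d i - 1) - t := by
  induction t with
  | zero => exact ⟨fun i => ⟨d i - 1, Nat.sub_lt (hd i) one_pos⟩, rfl⟩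
  | succ t ih =>
    obtain ⟨m, hm⟩ := ih
    by_cases h0 : ∑ i, (m i : ℕ) = 0
    · exact ⟨m, by omega⟩
    obtain ⟨i, -, hi⟩ := exists_ne_zero_of_sum_ne_zero h0
    refine ⟨update m i ⟨m i - 1, (Nat.sub_le _ _).trans_lt (m i).isLt⟩, ?_⟩
    have := sum_apply_update_add (fun i (x : Fin (d i)) => (x : ℕ)) m i
      ⟨m i - 1, (Nat.sub_le _ _).trans_lt (m i).isLt⟩
    simp only at this
    omega

def transfer (m : (i : Fin p) → Fin (d i)) (j : ℕ) (hj : j + 1 < p)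
    (h : (m ⟨j, by omega⟩ : ℕ) + 1 < d ⟨j, by omega⟩) : (i : Fin p) → Fin (d i) :=
  update (update m ⟨j, by omega⟩ ⟨_, h⟩) ⟨j + 1, hj⟩
    ⟨m ⟨j + 1, hj⟩ - 1, (Nat.sub_le _ _).trans_lt (m _).isLt⟩

section transfer

variable {m : (i : Fin p) → Fin (d i)} {j : ℕ} {hj : j + 1 < p}
  {h : (m ⟨j, by omega⟩ : ℕ) + 1 < d ⟨j, by omega⟩}

lemma sum_transfer (h₀ : 0 < (m ⟨j + 1, hj⟩ : ℕ)) :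
    ∑ i, (transfer m j hj h i : ℕ) = ∑ i, (m i : ℕ) := by
  have := sum_apply_update_update_add (fun i (x : Fin (d i)) => (x : ℕ)) m
    (J := ⟨j, by omega⟩) (J₁ := ⟨j + 1, hj⟩) (by simp) ⟨_, h⟩
    ⟨m ⟨j + 1, hj⟩ - 1, (Nat.sub_le _ _).trans_lt (m _).isLt⟩
  simp only at this
  rw [transfer]
  omega

lemma sum_mul_transfer_lt (h₀ : 0 < (m ⟨j + 1, hj⟩ : ℕ)) :
    ∑ i : Fin p, (i : ℕ) * transfer m j hj h i < ∑ i : Fin p, (i : ℕ) * m i := by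
  have := sum_apply_update_update_add (fun i (x : Fin (d i)) => (i : ℕ) * x) m
    (J := ⟨j, by omega⟩) (J₁ := ⟨j + 1, hj⟩) (by simp) ⟨_, h⟩
    ⟨m ⟨j + 1, hj⟩ - 1, (Nat.sub_le _ _).trans_lt (m _).isLt⟩
  simp only at this
  rw [transfer]
  obtain ⟨k, hk⟩ : ∃ k, (m ⟨j + 1, hj⟩ : ℕ) = k + 1 := ⟨_, (Nat.succ_pred_eq_of_pos h₀).symm⟩
  have e₁ : (j + 1) * ((m ⟨j + 1, hj⟩ : ℕ) - 1) = (j + 1) * k := by rw [hk, Nat.add_sub_cancel]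
  have e₂ : (j + 1) * (m ⟨j + 1, hj⟩ : ℕ) = (j + 1) * k + (j + 1) := by rw [hk]; ring
  linarith

end transfer

def IsPacked (m : (i : Fin p) → Fin (d i)) : Prop :=
  ∀ j (hj : j + 1 < p), (m ⟨j, by omega⟩ : ℕ) + 1 < d ⟨j, by omega⟩ → (m ⟨j + 1, hj⟩ : ℕ) = 0

namespace IsPacked

variable {m m' : (i : Fin p) → Fin (d i)}

lemma eq_zero_of_lt (hd : ∀ i, 2 ≤ d i) (hm : IsPacked m) {i : Fin p} (hi : (m i : ℕ) + 1 < d i)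
    {k : Fin p} (hik : i < k) : (m k : ℕ) = 0 := by
  obtain ⟨k, hk⟩ := k
  induction k with
  | zero => exact absurd (Fin.lt_def.mp hik) (Nat.not_lt_zero _)
  | succ k ih =>
    apply hm k hk
    rcases Nat.lt_succ_iff_lt_or_eq.mp (Fin.lt_def.mp hik) with h | h
    · rw [ih (by omega) (Fin.lt_def.mpr h)]
      exact hd _
    · have hik' : i = ⟨k, by omega⟩ := Fin.ext h
      rwa [← hik']

lemma sum_lt (hd : ∀ i, 2 ≤ d i) (hm : IsPacked m) {i₀ : Fin p} (hlt : (m i₀ : ℕ) < m' i₀)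
    (hagree : ∀ j < i₀, m j = m' j) : ∑ i, (m i : ℕ) < ∑ i, (m' i : ℕ) := by
  have hsupp : ∀ k, (m k : ℕ) ≠ 0 → k ≤ i₀ := fun k hk => not_lt.mp fun h =>
    hk (hm.eq_zero_of_lt hd (by omega : (m i₀ : ℕ) + 1 < d i₀) h)
  calc ∑ i, (m i : ℕ) = ∑ i with i ≤ i₀, (m i : ℕ) := (sum_filter_of_ne fun k _ => hsupp k).symm
    _ < ∑ i with i ≤ i₀, (m' i : ℕ) := by
      refine sum_lt_sum (fun k hk => ?_) ⟨i₀, by simp, hlt⟩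
      rcases (mem_filter.mp hk).2.lt_or_eq with h | rfl
      · rw [hagree k h]
      · exact hlt.le
    _ ≤ ∑ i, (m' i : ℕ) := sum_le_sum_of_subset (filter_subset _ _)

lemma eq (hd : ∀ i, 2 ≤ d i) (hm : IsPacked m) (hm' : IsPacked m')
    (h : ∑ i, (m i : ℕ) = ∑ i, (m' i : ℕ)) : m = m' := by
  by_contra hne
  obtain ⟨i₀, hi₀, hmin⟩ := exists_min_image (univ.filter fun i => m i ≠ m' i) id
    (let ⟨i, hi⟩ := Function.ne_iff.mp hne; ⟨i, by simpa using hi⟩)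
  have hagree : ∀ j < i₀, m j = m' j := fun j hj => by
    by_contra hj'
    exact absurd (hmin j (by simpa using hj')) (not_le.mpr hj)
  rcases lt_or_gt_of_ne (Fin.val_ne_of_ne (mem_filter.mp hi₀).2) with hlt | hlt
  · exact (hm.sum_lt hd hlt hagree).ne h
  · exact (hm'.sum_lt hd hlt fun j hj => (hagree j hj).symm).ne h.symm

end IsPacked

theorem apply_eq_of_transfer_invariant (hd : ∀ i, 2 ≤ d i) {X : Type*}
    (f : ((i : Fin p) → Fin (d i)) → X)
    (hf : ∀ m j hj h, 0 < (m ⟨j + 1, hj⟩ : ℕ) → f (transfer m j hj h) = f m)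
    {m m' : (i : Fin p) → Fin (d i)} (h : ∑ i, (m i : ℕ) = ∑ i, (m' i : ℕ)) : f m = f m' := by
  have hpacked : ∀ m, ∃ m₀, IsPacked m₀ ∧ ∑ i, (m₀ i : ℕ) = ∑ i, (m i : ℕ) ∧ f m₀ = f m := by
    intro m
    induction hφ : ∑ i : Fin p, (i : ℕ) * m i using Nat.strong_induction_on generalizing m with
    | _ φ ih =>
      by_cases hm : IsPacked m
      · exact ⟨m, hm, rfl, rfl⟩
      simp only [IsPacked, not_forall] at hm
      obtain ⟨j, hj, h₁, h₀⟩ := hm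
      obtain ⟨m₀, hp, hs, hf₀⟩ :=
        ih _ (hφ ▸ sum_mul_transfer_lt (Nat.pos_of_ne_zero h₀)) (transfer m j hj h₁) rfl
      exact ⟨m₀, hp, hs.trans (sum_transfer (Nat.pos_of_ne_zero h₀)),
        hf₀.trans (hf m j hj h₁ (Nat.pos_of_ne_zero h₀))⟩
  obtain ⟨m₀, hp, hs, hf₀⟩ := hpacked m
  obtain ⟨m₀', hp', hs', hf₀'⟩ := hpacked m'
  rw [← hf₀, ← hf₀', hp.eq hd hp' (by rw [hs, hs', h])]

lemma eq_zero_of_KactG_eq (hq : NotRootOfUnity q) {v : VG p d} {s : ℤ}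
    (hK : KactG q p d v = fun m => q ^ s * v m) (m : (i : Fin p) → Fin (d i))
    (hm : ∑ j, ((d j : ℤ) - 1 - 2 * (m j : ℕ)) ≠ s) : v m = 0 := by
  by_contra hv
  have hKm := congrFun hK m
  rw [KactG, prod_zpow_eq_zpow_sum hq.ne_zero] at hKm
  exact hm (hq.zpow_inj (mul_right_cancel₀ hv hKm))

lemma div_topCoeff_transfer (hq : NotRootOfUnity q) {v : VG p d}
    (hv : ∀ j (hj : j + 1 < p), v ∈ TopPairCG q p d j hj) (m : (i : Fin p) → Fin (d i)) (j : ℕ)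
    (hj : j + 1 < p) (h : (m ⟨j, by omega⟩ : ℕ) + 1 < d ⟨j, by omega⟩)
    (h₀ : 0 < (m ⟨j + 1, hj⟩ : ℕ)) :
    v (transfer m j hj h) / topCoeff q d (transfer m j hj h) = v m / topCoeff q d m := by
  let a : Fin (d ⟨j, by omega⟩) := ⟨_, h⟩
  let b : Fin (d ⟨j + 1, hj⟩) := ⟨m ⟨j + 1, hj⟩ - 1, (Nat.sub_le _ _).trans_lt (m _).isLt⟩
  have hab : (a : ℕ) + b = m ⟨j, by omega⟩ + m ⟨j + 1, hj⟩ := by simp only [a, b]; omega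
  have hv' : v m * pairTopCoeff q _ a b =
      v (transfer m j hj h) * pairTopCoeff q _ (m ⟨j, by omega⟩) (m ⟨j + 1, hj⟩) :=
    mul_pairTopCoeff_of_mem_topPairCG hq (hv j hj) m a b hab
  have hΘ : topCoeff q d m * pairTopCoeff q _ a b =
      topCoeff q d (transfer m j hj h) * pairTopCoeff q _ (m ⟨j, by omega⟩) (m ⟨j + 1, hj⟩) :=
    topCoeff_mul_pairTopCoeff hq (J := ⟨j, by omega⟩) (J₁ := ⟨j + 1, hj⟩) rfl m a b hab
  rw [div_eq_div_iff (topCoeff_ne_zero hq _) (topCoeff_ne_zero hq _)]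
  apply mul_right_cancel₀ (pairTopCoeff_ne_zero hq (d ⟨j, by omega⟩) a b)
  linear_combination v (transfer m j hj h) * hΘ - topCoeff q d (transfer m j hj h) * hv'

lemma sum_intCast_sub_one (hd : ∀ i, 0 < d i) :
    ∑ i, ((d i : ℤ) - 1) = ((∑ i, (d i - 1) : ℕ) : ℤ) := by
  push_cast [Nat.cast_sub (hd _)]
  rfl

lemma sum_weight_eq (hd : ∀ i, 0 < d i) (m : (i : Fin p) → Fin (d i)) :
    ∑ j, ((d j : ℤ) - 1 - 2 * (m j : ℕ)) =
      ((∑ i, (d i - 1) : ℕ) : ℤ) - 2 * ((∑ j, (m j : ℕ) : ℕ) : ℤ) := by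
  rw [sum_sub_distrib, sum_intCast_sub_one hd, ← mul_sum]
  push_cast
  rfl

theorem exists_eq_mul_topCoeff (hq : NotRootOfUnity q) (hd : ∀ i, 2 ≤ d i) {v : VG p d}
    (hv : ∀ j (hj : j + 1 < p), v ∈ TopPairCG q p d j hj) (r : ℕ) :
    ∃ c : ℂ, ∀ m : (i : Fin p) → Fin (d i), ∑ i, (m i : ℕ) = r → v m = c * topCoeff q d m := by
  by_cases hr : ∃ m₁ : (i : Fin p) → Fin (d i), ∑ i, (m₁ i : ℕ) = r
  · obtain ⟨m₁, hm₁⟩ := hr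
    refine ⟨v m₁ / topCoeff q d m₁, fun m hm => (div_eq_iff (topCoeff_ne_zero hq m)).mp ?_⟩
    exact apply_eq_of_transfer_invariant hd (fun m => v m / topCoeff q d m)
      (div_topCoeff_transfer hq hv) (hm.trans hm₁.symm)
  · exact ⟨0, fun m hm => absurd ⟨m, hm⟩ hr⟩

theorem eq_zero_of_EactG_eq_zero (hq : NotRootOfUnity q) (hd : ∀ i, 0 < d i) {v : VG p d}
    {c : ℂ} {r : ℕ} (hr : 0 < r) (hrn : r ≤ ∑ i, (d i - 1)) (hE : EactG q p d v = 0)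
    (hv : ∀ m : (i : Fin p) → Fin (d i), ∑ i, (m i : ℕ) = r → v m = c * topCoeff q d m) :
    c = 0 := by
  obtain ⟨m₀, hm₀⟩ := exists_sum_eq hd (∑ i, (d i - 1) - (r - 1))
  have hE₀ := EactG_apply_mul_sq_sub_one hq m₀ fun m hm => hv m (by omega)
  have hqq : q ^ ∑ j, ((d j : ℤ) - 1 - 2 * (m₀ j : ℕ)) - q ^ (-∑ j, ((d j : ℤ) - 1)) ≠ 0 :=
    sub_ne_zero.mpr fun h => by
      have := hq.zpow_inj h
      rw [sum_weight_eq hd, sum_intCast_sub_one hd] at this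
      omega
  rw [hE, Pi.zero_apply, zero_mul] at hE₀
  simpa only [mul_eq_zero, topCoeff_ne_zero hq m₀, hq.ne_zero, hqq, or_false,
    qsqInt_ne_zero hq (n := ∑ i, (m₀ i : ℕ) + 1) (by omega)] using hE₀.symm

end TopPairs

open TopPairs

/-- If `n = ∑ᵢ sᵢ > s ≥ 0` with `s ≡ n (mod 2)` and `v ∈ M_{d_p} ⊗ ⋯ ⊗ M_{d_1}`
satisfies `E.v = 0`, `K.v = q^s v`, and all generalized projections
`π̃_j^(δ)(v) = 0` for every adjacent pair `j` and every `m ∈ {1,…,min(s_j,s_{j+1})}`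
(equivalently, `v` lies in the top Clebsch–Gordan summand of every adjacent pair),
then `v = 0`. -/
theorem highest_weight_vector_in_all_top_pairs_is_zero
    (q : ℂ) (hq : NotRootOfUnity q) (p : ℕ) (d : Fin p → ℕ) (hd : ∀ i, 2 ≤ d i)
    (s : ℕ) (hns : s < ∑ i, (d i - 1)) (hpar : (∑ i, (d i - 1)) % 2 = s % 2)
    (v : VG p d)
    (hE : EactG q p d v = 0)
    (hK : KactG q p d v = fun m => q ^ (s : ℤ) * v m)
    (htop : ∀ (j : ℕ) (hj : j + 1 < p), v ∈ TopPairCG q p d j hj) :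
    v = 0 := by
  have hd₀ : ∀ i, 0 < d i := fun i => by have := hd i; omega
  obtain ⟨r, hr⟩ : ∃ r, s + 2 * r = ∑ i, (d i - 1) := ⟨(∑ i, (d i - 1) - s) / 2, by omega⟩
  obtain ⟨c, hc⟩ := exists_eq_mul_topCoeff hq hd htop r
  have hc₀ : c = 0 := eq_zero_of_EactG_eq_zero hq hd₀ (by omega) (by omega) hE hc
  funext m
  by_cases hm : ∑ i, (m i : ℕ) = r
  · rw [hc m hm, hc₀, zero_mul, Pi.zero_apply]
  · exact eq_zero_of_KactG_eq hq hK m (by rw [sum_weight_eq hd₀]; omega)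
end
end
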